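/- arXiv:1403.4108 — 4 statements merged into one kernel-verified Lean document; each statement's English description precedes it below -/
import Mathlib

section
/- Let s be an orthogonal linear transformation of a finite-dimensional real inner product space V with s = s¹ s², where s¹ and s² are orthogonal involutions. Let V₋₁, V₋₁¹, V₋₁² be the (−1)-eigenspaces of s, s¹, s² respectively, and V₀¹, V₀² the fixed subspaces of s¹, s². Then V₋₁ ∩ V₋₁¹ = V₋₁ ∩ V₀² and V₋₁ ∩ V₋₁² = V₋₁ ∩ V₀¹, and V₋₁ is the orthogonal direct sum of V₋₁ ∩ V₋₁¹ and V₋₁ ∩ V₋₁². -/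
open RealInnerProductSpace

theorem stmt3 {V : Type*} [NormedAddCommGroup V] [InnerProductSpace ℝ V]
    [FiniteDimensional ℝ V]
    (s1 s2 : V ≃ₗᵢ[ℝ] V) (h1 : ∀ x, s1 (s1 x) = x) (h2 : ∀ x, s2 (s2 x) = x) :
    ({x : V | s1 (s2 x) = -x ∧ s1 x = -x} = {x : V | s1 (s2 x) = -x ∧ s2 x = x}) ∧
    ({x : V | s1 (s2 x) = -x ∧ s2 x = -x} = {x : V | s1 (s2 x) = -x ∧ s1 x = x}) ∧
    (∀ a b : V, s1 (s2 a) = -a → s1 a = -a → s1 (s2 b) = -b → s2 b = -b →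
      ⟪a, b⟫ = 0) ∧
    (∀ x : V, s1 (s2 x) = -x →
      ∃ a b : V, s1 (s2 a) = -a ∧ s1 a = -a ∧ s1 (s2 b) = -b ∧ s2 b = -b ∧
        x = a + b) := by
  have key : ∀ x : V, s1 (s2 x) = -x → s2 x = -s1 x := by
    intro x hx
    have := congrArg s1 hx
    rw [h1] at this
    rw [this, map_neg]
  refine ⟨?_, ?_, ?_, ?_⟩
  · ext x
    simp only [Set.mem_setOf_eq]
    constructor
    · rintro ⟨hx, hx1⟩
      refine ⟨hx, ?_⟩
      rw [key x hx, hx1, neg_neg]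
    · rintro ⟨hx, hx2⟩
      refine ⟨hx, ?_⟩
      have := key x hx
      rw [hx2] at this
      exact (neg_eq_iff_eq_neg.mpr this).symm
  · ext x
    simp only [Set.mem_setOf_eq]
    constructor
    · rintro ⟨hx, hx2⟩
      refine ⟨hx, ?_⟩
      have := key x hx
      rw [hx2] at this
      exact (neg_injective this).symm
    · rintro ⟨hx, hx1⟩
      refine ⟨hx, ?_⟩
      rw [key x hx, hx1]
  · intro a b ha hab hb hb2
    have hb1 : s1 b = b := by
      have := key b hb
      rw [hb2] at this
      exact (neg_injective this).symm
    have : ⟪s1 a, s1 b⟫ = ⟪a, b⟫ := s1.inner_map_map a b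
    rw [hab, hb1, inner_neg_left] at this
    linarith
  · intro x hx
    have hs2 : s2 x = -s1 x := key x hx
    have hs21 : s2 (s1 x) = -x := by
      have := congrArg s2 hs2
      rw [h2, map_neg] at this
      rw [eq_comm, neg_eq_iff_eq_neg, eq_comm]
      exact this.symm
    refine ⟨(2:ℝ)⁻¹ • (x - s1 x), (2:ℝ)⁻¹ • (x + s1 x), ?_, ?_, ?_, ?_, ?_⟩
    · simp only [map_smul, map_sub, map_add, map_neg, hs2, hs21, h1]
      module
    · simp only [map_smul, map_sub, map_add, map_neg, hs2, hs21, h1]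
      module
    · simp only [map_smul, map_sub, map_add, map_neg, hs2, hs21, h1]
      module
    · simp only [map_smul, map_sub, map_add, map_neg, hs2, hs21, h1]
      module
    · module
end

section
/- Let V = ℝⁿ with orthonormal basis ε₁,…,ε_n and let Δ = {±ε_i ± ε_j : 1 ≤ i < j ≤ n} ∪ {±ε_i} be the root system of type B_n. Let s be the Weyl group element acting as the positive cycle ε₁ → ε₂ → ε₄ → … → ε_k → ε_{k−1} → … → ε₃ → ε₁ of even length k (2 < k ≤ n) and fixing ε_{k+1},…,ε_n. Then the set of roots fixed by s is Δ ∩ span(ε_{k+1},…,ε_n), which is a root system of type B_{n−k}, and it has 2(n−k)² elements. -/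
/-- The standard basis vector `ε_i` of `ℝⁿ`. -/
def eB (n : ℕ) (i : Fin n) : Fin n → ℝ := Pi.single i 1

/-- The roots of type `B` supported on a set `I` of indices:
`±ε_i ± ε_j` (`i ≠ j` in `I`) and `±ε_i` (`i ∈ I`). -/
def DeltaB (n : ℕ) (I : Set (Fin n)) : Set (Fin n → ℝ) :=
  {v | (∃ i ∈ I, ∃ j ∈ I, i ≠ j ∧ v = eB n i - eB n j) ∨
       (∃ i ∈ I, ∃ j ∈ I, i < j ∧ (v = eB n i + eB n j ∨ v = -(eB n i + eB n j))) ∨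
       (∃ i ∈ I, v = eB n i ∨ v = -(eB n i))}

/-!
A root of type `B` has at most two nonzero coordinates. If `α ∘ s⁻¹ = α` and `α m ≠ 0`, then
`α` is also nonzero at `s m` and `s (s m)`; since `s` is a cycle of length `k > 2` it has no
orbit of size two, so these three indices cannot all be distinct, forcing `s m = m`. Hence the
fixed roots are exactly the roots supported on the fixed indices `{k, …, n - 1}`, i.e. the roots
lying in their span. Counting the roots `ε_i - ε_j`, `±(ε_i + ε_j)`, `±ε_i` supported on a set of
size `m` gives `m(m-1) + m(m-1) + m + m = 2m²`.
-/

open Finset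

theorem Fin.card_filter_le_val {n k : ℕ} (hkn : k ≤ n) : #{i : Fin n | k ≤ (i : ℕ)} = n - k := by
  have := card_filter_add_card_filter_not (s := univ) fun i : Fin n => (i : ℕ) < k
  simp only [Fin.card_filter_val_lt, not_lt, card_univ, Fintype.card_fin] at this
  omega

theorem Equiv.Perm.IsCycle.apply_eq_self_of_apply_apply_eq_self {α : Type*} [Fintype α]
    [DecidableEq α] {σ : Equiv.Perm α} (hσ : σ.IsCycle) (h : 2 < #σ.support) {x : α}
    (hx : σ (σ x) = x) : σ x = x := by
  by_contra hx'
  have hsq : σ ^ 2 = 1 := hσ.pow_eq_one_iff.2 ⟨x, hx', by rwa [sq, Equiv.Perm.mul_apply]⟩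
  have := Nat.le_of_dvd two_pos (hσ.orderOf ▸ orderOf_dvd_of_pow_eq_one hsq)
  omega

theorem comp_symm_eq_self_iff_of_support_subset_pair {ι R : Type*} [Zero R] {σ : Equiv.Perm ι}
    (hσ : ∀ x, σ (σ x) = x → σ x = x) {α : ι → R} {i j : ι}
    (hα : ∀ m, α m ≠ 0 → m = i ∨ m = j) :
    (fun m => α (σ.symm m)) = α ↔ ∀ m, α m ≠ 0 → σ m = m := by
  constructor
  · intro h m hm
    have hinv : ∀ m, α (σ m) = α m := fun m => by simpa using (congrFun h (σ m)).symm
    by_contra hm'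
    have h₁ : σ m ≠ σ (σ m) := fun h => hm' (σ.injective h).symm
    have h₂ : m ≠ σ (σ m) := fun h => hm' (hσ m h.symm)
    have hm₀ := hα m hm
    have hm₁ := hα (σ m) (by rwa [hinv])
    have hm₂ := hα (σ (σ m)) (by rwa [hinv, hinv])
    grind
  · intro h
    funext m
    by_cases hm : α m = 0
    · rw [hm]
      by_contra hm'
      have hfix := h _ hm'
      rw [Equiv.apply_symm_apply] at hfix
      exact hm' (hfix ▸ hm)
    · rw [← h m hm, Equiv.symm_apply_apply, h m hm]

section RootsB

variable {n : ℕ}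

theorem eB_apply (i m : Fin n) : eB n i m = if m = i then 1 else 0 := Pi.single_apply i 1 m

theorem eB_apply_ne_zero_iff {i m : Fin n} : eB n i m ≠ 0 ↔ m = i := by
  simp [eB_apply]

theorem eB_injective : Function.Injective (eB n) := fun i j h =>
  eB_apply_ne_zero_iff.1 (by rw [← h]; simp [eB_apply])

theorem sum_eB (i : Fin n) : ∑ m, eB n i m = 1 := by simp [eB_apply]

theorem sum_eB_sub_eB (i j : Fin n) : ∑ m, (eB n i - eB n j) m = 0 := by
  simp [Finset.sum_sub_distrib, sum_eB]

theorem eB_sub_eB_apply_ne_zero_iff {i j m : Fin n} (hij : i ≠ j) :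
    (eB n i - eB n j) m ≠ 0 ↔ m = i ∨ m = j := by
  by_cases hi : m = i <;> by_cases hj : m = j <;> simp_all [eB_apply]

theorem eB_add_eB_apply_ne_zero_iff {i j m : Fin n} :
    (eB n i + eB n j) m ≠ 0 ↔ m = i ∨ m = j := by
  by_cases hi : m = i <;> by_cases hj : m = j <;> simp_all [eB_apply]

theorem eB_sub_eB_apply_eq_one_iff {i j m : Fin n} (hij : i ≠ j) :
    (eB n i - eB n j) m = 1 ↔ m = i := by
  by_cases hi : m = i <;> by_cases hj : m = j <;> norm_num [eB_apply, hi, hj, hij, hij.symm]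

theorem eB_sub_eB_apply_eq_neg_one_iff {i j m : Fin n} (hij : i ≠ j) :
    (eB n i - eB n j) m = -1 ↔ m = j := by
  by_cases hi : m = i <;> by_cases hj : m = j <;> norm_num [eB_apply, hi, hj, hij, hij.symm]

theorem eB_sub_eB_injOn :
    Set.InjOn (fun p : Fin n × Fin n => eB n p.1 - eB n p.2) {p | p.1 ≠ p.2} := by
  rintro ⟨i, j⟩ hij ⟨i', j'⟩ hij' h
  simp only [Set.mem_ofPred_eq] at h hij hij'
  refine Prod.ext ((eB_sub_eB_apply_eq_one_iff hij').1 ?_)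
    ((eB_sub_eB_apply_eq_neg_one_iff hij').1 ?_)
  · rw [← h, eB_sub_eB_apply_eq_one_iff hij]
  · rw [← h, eB_sub_eB_apply_eq_neg_one_iff hij]

theorem mem_of_mem_DeltaB_of_apply_ne_zero {I : Set (Fin n)} {α : Fin n → ℝ}
    (hα : α ∈ DeltaB n I) {m : Fin n} (hm : α m ≠ 0) : m ∈ I := by
  rcases hα with ⟨i, hi, j, hj, hij, rfl⟩ | ⟨i, hi, j, hj, -, rfl | rfl⟩ | ⟨i, hi, rfl | rfl⟩
  · rcases (eB_sub_eB_apply_ne_zero_iff hij).1 hm with rfl | rfl <;> assumption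
  all_goals
    simp only [Pi.neg_apply, neg_ne_zero, eB_add_eB_apply_ne_zero_iff, eB_apply_ne_zero_iff] at hm
    grind

theorem DeltaB_eq_sep_support (I : Set (Fin n)) :
    DeltaB n I = {α ∈ DeltaB n Set.univ | ∀ m, α m ≠ 0 → m ∈ I} := by
  ext α
  refine ⟨fun hα => ⟨?_, fun m => mem_of_mem_DeltaB_of_apply_ne_zero hα⟩, fun ⟨hα, hsupp⟩ => ?_⟩
  · rcases hα with ⟨i, -, j, -, h⟩ | ⟨i, -, j, -, h⟩ | ⟨i, -, h⟩
    exacts [.inl ⟨i, trivial, j, trivial, h⟩, .inr (.inl ⟨i, trivial, j, trivial, h⟩),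
      .inr (.inr ⟨i, trivial, h⟩)]
  · rcases hα with ⟨i, -, j, -, hij, rfl⟩ | ⟨i, -, j, -, hij, hsign⟩ | ⟨i, -, hsign⟩
    · exact .inl ⟨i, hsupp i ((eB_sub_eB_apply_ne_zero_iff hij).2 (.inl rfl)),
        j, hsupp j ((eB_sub_eB_apply_ne_zero_iff hij).2 (.inr rfl)), hij, rfl⟩
    · have hij' : ∀ m, m = i ∨ m = j → m ∈ I := fun m hm => hsupp m <| by
        rcases hsign with rfl | rfl
        exacts [eB_add_eB_apply_ne_zero_iff.2 hm, neg_ne_zero.2 (eB_add_eB_apply_ne_zero_iff.2 hm)]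
      exact .inr (.inl ⟨i, hij' i (.inl rfl), j, hij' j (.inr rfl), hij, hsign⟩)
    · have hi : i ∈ I := hsupp i <| by rcases hsign with rfl | rfl <;> simp [eB_apply]
      exact .inr (.inr ⟨i, hi, hsign⟩)

theorem exists_support_subset_pair_of_mem_DeltaB {I : Set (Fin n)} {α : Fin n → ℝ}
    (hα : α ∈ DeltaB n I) : ∃ i j, ∀ m, α m ≠ 0 → m = i ∨ m = j := by
  rcases hα with ⟨i, -, j, -, hij, rfl⟩ | ⟨i, -, j, -, -, rfl | rfl⟩ | ⟨i, -, rfl | rfl⟩ <;>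
    refine ⟨i, ?_⟩
  · exact ⟨j, fun m => (eB_sub_eB_apply_ne_zero_iff hij).1⟩
  · exact ⟨j, fun m hm => eB_add_eB_apply_ne_zero_iff.1 hm⟩
  · exact ⟨j, fun m hm => eB_add_eB_apply_ne_zero_iff.1 (neg_ne_zero.1 hm)⟩
  · exact ⟨i, fun m hm => .inl (eB_apply_ne_zero_iff.1 hm)⟩
  · exact ⟨i, fun m hm => .inl (eB_apply_ne_zero_iff.1 (neg_ne_zero.1 hm))⟩

theorem mem_span_eB_image_iff {I : Set (Fin n)} {v : Fin n → ℝ} :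
    v ∈ Submodule.span ℝ (eB n '' I) ↔ ∀ m, v m ≠ 0 → m ∈ I := by
  have : eB n = Pi.basisFun ℝ (Fin n) := funext fun i => (Pi.basisFun_apply ℝ (Fin n) i).symm
  rw [this, Module.Basis.mem_span_image]
  simp [Set.subset_def, Pi.basisFun_repr]

theorem DeltaB_univ_inter_span (I : Set (Fin n)) :
    DeltaB n Set.univ ∩ Submodule.span ℝ (eB n '' I) = DeltaB n I := by
  rw [DeltaB_eq_sep_support I]
  ext v
  simp [mem_span_eB_image_iff]

/-- The fixed root subsystem `Δ₀^σ`. -/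
def fixedRoots (σ : Equiv.Perm (Fin n)) : Set (Fin n → ℝ) :=
  {α ∈ DeltaB n Set.univ | (fun j => α (σ.symm j)) = α}

theorem fixedRoots_eq_DeltaB_fixed {σ : Equiv.Perm (Fin n)}
    (hσ : ∀ x, σ (σ x) = x → σ x = x) : fixedRoots σ = DeltaB n {i | σ i = i} := by
  rw [DeltaB_eq_sep_support]
  refine Set.sep_ext_iff.2 fun α hα => ?_
  obtain ⟨i, j, hij⟩ := exists_support_subset_pair_of_mem_DeltaB hα
  exact comp_symm_eq_self_iff_of_support_subset_pair hσ hij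

/-- The roots `±(ε_i + ε_j)` indexed by ordered pairs: each arises from exactly one pair with
`i ≠ j`. -/
def signedSum (i j : Fin n) : Fin n → ℝ := if i < j then eB n i + eB n j else -(eB n i + eB n j)

theorem signedSum_apply (i j m : Fin n) :
    signedSum i j m = (if i < j then 1 else -1) * (eB n i + eB n j) m := by
  unfold signedSum
  split_ifs <;> simp

theorem signedSum_apply_ne_zero_iff {i j m : Fin n} :
    signedSum i j m ≠ 0 ↔ m = i ∨ m = j := by
  rw [signedSum_apply, mul_ne_zero_iff, eB_add_eB_apply_ne_zero_iff]
  split_ifs <;> simp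

theorem signedSum_apply_left {i j : Fin n} (hij : i ≠ j) :
    signedSum i j i = if i < j then 1 else -1 := by
  simp [signedSum_apply, eB_apply, hij]

theorem signedSum_apply_right {i j : Fin n} (hij : i ≠ j) :
    signedSum i j j = if i < j then 1 else -1 := by
  simp [signedSum_apply, eB_apply, hij.symm]

theorem sum_signedSum (i j : Fin n) : ∑ m, signedSum i j m = if i < j then 2 else -2 := by
  simp only [signedSum_apply, ← Finset.mul_sum, Pi.add_apply, Finset.sum_add_distrib, sum_eB]
  split_ifs <;> norm_num

theorem signedSum_injOn :
    Set.InjOn (fun p : Fin n × Fin n => signedSum p.1 p.2) {p | p.1 ≠ p.2} := by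
  rintro ⟨i, j⟩ hij ⟨i', j'⟩ hij' h
  simp only [Set.mem_ofPred_eq] at h hij hij'
  have hsupp : ∀ m, m = i ∨ m = j ↔ m = i' ∨ m = j' := fun m => by
    rw [← signedSum_apply_ne_zero_iff, ← signedSum_apply_ne_zero_iff, h]
  obtain ⟨rfl, rfl⟩ | ⟨rfl, rfl⟩ : i = i' ∧ j = j' ∨ i = j' ∧ j = i' := by
    have := (hsupp i).1 (.inl rfl)
    have := (hsupp j).1 (.inr rfl)
    grind
  · rfl
  · have hi := congrFun h i
    rw [signedSum_apply_left hij, signedSum_apply_right hij'] at hi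
    split_ifs at hi <;> grind

theorem DeltaB_coe_finset (T : Finset (Fin n)) :
    DeltaB n T = ↑(T.offDiag.image (fun p => eB n p.1 - eB n p.2) ∪
      T.offDiag.image (fun p => signedSum p.1 p.2) ∪ T.image (eB n) ∪ T.image (-eB n ·)) := by
  ext v
  simp only [coe_union, coe_image, coe_offDiag, Set.mem_union, Set.mem_image, Set.mem_offDiag,
    mem_coe, Prod.exists]
  constructor
  · rintro (⟨i, hi, j, hj, hij, rfl⟩ | ⟨i, hi, j, hj, hij, rfl | rfl⟩ | ⟨i, hi, rfl | rfl⟩)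
    · exact .inl (.inl (.inl ⟨i, j, ⟨hi, hj, hij⟩, rfl⟩))
    · exact .inl (.inl (.inr ⟨i, j, ⟨hi, hj, hij.ne⟩, if_pos hij⟩))
    · refine .inl (.inl (.inr ⟨j, i, ⟨hj, hi, hij.ne'⟩, ?_⟩))
      rw [signedSum, if_neg hij.not_gt, add_comm]
    · exact .inl (.inr ⟨i, hi, rfl⟩)
    · exact .inr ⟨i, hi, rfl⟩
  · rintro (((⟨i, j, ⟨hi, hj, hij⟩, rfl⟩ | ⟨i, j, ⟨hi, hj, hij⟩, rfl⟩) | ⟨i, hi, rfl⟩) |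
      ⟨i, hi, rfl⟩)
    · exact .inl ⟨i, hi, j, hj, hij, rfl⟩
    · rcases hij.lt_or_gt with h | h
      · exact .inr (.inl ⟨i, hi, j, hj, h, .inl (if_pos h)⟩)
      · refine .inr (.inl ⟨j, hj, i, hi, h, .inr ?_⟩)
        rw [signedSum, if_neg h.not_gt, add_comm]
    · exact .inr (.inr ⟨i, hi, .inl rfl⟩)
    · exact .inr (.inr ⟨i, hi, .inr rfl⟩)

theorem ncard_DeltaB_coe_finset (T : Finset (Fin n)) : (DeltaB n T).ncard = 2 * #T ^ 2 := by
  set D := T.offDiag.image (fun p => eB n p.1 - eB n p.2)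
  set S := T.offDiag.image (fun p => signedSum p.1 p.2)
  set P := T.image (eB n)
  set N := T.image (-eB n ·)
  -- the coordinate sum separates the four families
  have hD : ∀ v ∈ D, ∑ m, v m = 0 := forall_mem_image.2 fun p _ => sum_eB_sub_eB p.1 p.2
  have hS : ∀ v ∈ S, ∑ m, v m = 2 ∨ ∑ m, v m = -2 := forall_mem_image.2 fun p _ => by
    rw [sum_signedSum]
    split_ifs <;> simp
  have hP : ∀ v ∈ P, ∑ m, v m = 1 := forall_mem_image.2 fun i _ => sum_eB i
  have hN : ∀ v ∈ N, ∑ m, v m = -1 := forall_mem_image.2 fun i _ => by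
    simp [Finset.sum_neg_distrib, sum_eB]
  have hdisj : Disjoint D S ∧ Disjoint (D ∪ S) P ∧ Disjoint (D ∪ S ∪ P) N := by
    simp only [disjoint_union_left]
    refine ⟨?_, ⟨?_, ?_⟩, ⟨?_, ?_⟩, ?_⟩ <;> exact disjoint_left.2 fun v h h' => by grind
  have hT : #T ≤ #T * #T := Nat.le_mul_self _
  rw [DeltaB_coe_finset, Set.ncard_coe_finset, card_union_of_disjoint hdisj.2.2,
    card_union_of_disjoint hdisj.2.1, card_union_of_disjoint hdisj.1,
    card_image_of_injOn (eB_sub_eB_injOn.mono fun p hp => (mem_offDiag.1 hp).2.2),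
    card_image_of_injOn (signedSum_injOn.mono fun p hp => (mem_offDiag.1 hp).2.2),
    card_image_of_injective _ eB_injective,
    card_image_of_injective _ fun i j h => eB_injective (neg_injective h), offDiag_card]
  zify [hT]
  ring

end RootsB

theorem stmt8_general (n k : ℕ) (h2 : 2 < k) (hkn : k ≤ n)
    (σ : Equiv.Perm (Fin n)) (hcyc : σ.IsCycle)
    (hfix : ∀ i : Fin n, σ i = i ↔ k ≤ (i : ℕ)) :
    ({α ∈ DeltaB n Set.univ | (fun j => α (σ.symm j)) = α}
        = DeltaB n {i | k ≤ (i : ℕ)}) ∧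
    ({α ∈ DeltaB n Set.univ | (fun j => α (σ.symm j)) = α}
        = DeltaB n Set.univ ∩
            (Submodule.span ℝ (eB n '' {i | k ≤ (i : ℕ)}) : Set (Fin n → ℝ))) ∧
    {α ∈ DeltaB n Set.univ | (fun j => α (σ.symm j)) = α}.ncard
        = 2 * (n - k) ^ 2 := by
  have hsupp : σ.support = ({i | (i : ℕ) < k} : Finset (Fin n)) := by
    ext i
    simp [hfix]
  have hσ : ∀ x, σ (σ x) = x → σ x = x := fun x =>
    hcyc.apply_eq_self_of_apply_apply_eq_self (by rw [hsupp, Fin.card_filter_val_lt]; omega)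
  have hroots : fixedRoots σ = DeltaB n {i | k ≤ (i : ℕ)} := by
    rw [fixedRoots_eq_DeltaB_fixed hσ]
    exact congrArg _ (Set.ext hfix)
  refine ⟨hroots, hroots.trans (DeltaB_univ_inter_span _).symm, ?_⟩
  change (fixedRoots σ).ncard = _
  rw [hroots, ← coe_filter_univ, ncard_DeltaB_coe_finset, Fin.card_filter_le_val hkn]

theorem stmt8 (n k : ℕ) (hke : Even k) (h2 : 2 < k) (hkn : k ≤ n)
    (σ : Equiv.Perm (Fin n)) (hcyc : σ.IsCycle)
    (hfix : ∀ i : Fin n, σ i = i ↔ k ≤ (i : ℕ)) :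
    ({α ∈ DeltaB n Set.univ | (fun j => α (σ.symm j)) = α}
        = DeltaB n {i | k ≤ (i : ℕ)}) ∧
    ({α ∈ DeltaB n Set.univ | (fun j => α (σ.symm j)) = α}
        = DeltaB n Set.univ ∩
            (Submodule.span ℝ (eB n '' {i | k ≤ (i : ℕ)}) : Set (Fin n → ℝ))) ∧
    {α ∈ DeltaB n Set.univ | (fun j => α (σ.symm j)) = α}.ncard
        = 2 * (n - k) ^ 2 :=
  stmt8_general n k h2 hkn σ hcyc hfix
end

section
/- Let s be a rotation through angle 2π/m (m ≥ 2 an integer) of a Euclidean plane P, and let S ⊂ P be a finite s-invariant set not containing 0. If a half-plane {x : ⟨x, v⟩ > 0} (for some regular vector v, i.e., ⟨x,v⟩ ≠ 0 for all x ∈ S) is used to define the positive part S₊ of S, then the number of elements x ∈ S₊ with s(x) ∉ S₊ equals |S|/m. -/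
open Real Set Function

/-!
Write `α = 2π/m`. In polar terms `⟪s^k x, v⟫ = ‖x‖‖v‖ sin (u - kα)` for a fixed angle `u`, so `s^k x`
leaves the half-plane at the next step exactly when `u - kα` lies in `[0, α)` modulo `2π`, and this
happens for exactly one residue `k` mod `m`. Hence every orbit meets the set of exit points `T`
exactly once, and `(t, k) ↦ s^k t` is a bijection `T × Fin m ≃ S`.
-/

theorem Set.ncard_mul_eq_ncard_of_existsUnique_iterate_mem {α : Type*} {f : α → α}
    {S T : Set α} {m : ℕ} (hTS : T ⊆ S) (hf : MapsTo f S S) (hper : ∀ x ∈ S, f^[m] x = x)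
    (huniq : ∀ x ∈ S, ∃! k, k < m ∧ f^[k] x ∈ T) : T.ncard * m = S.ncard := by
  have hback {t t' : α} (ht : t ∈ T) (ht' : t' ∈ T) {k k' : ℕ} (hkk' : k ≤ k') (hk' : k' < m)
      (h : f^[k] t = f^[k'] t') : t = t' ∧ k = k' := by
    have ht_eq : t = f^[k' - k] t' := by
      have h' := congrArg f^[m - k] h
      rwa [← iterate_add_apply, ← iterate_add_apply, Nat.sub_add_cancel (by omega),
        hper t (hTS ht), show m - k + k' = k' - k + m by omega, iterate_add_apply,
        hper t' (hTS ht')] at h'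
    have hk : k' - k = 0 := (huniq t' (hTS ht')).unique ⟨by omega, ht_eq ▸ ht⟩ ⟨by omega, ht'⟩
    exact ⟨by rwa [hk] at ht_eq, by omega⟩
  let Φ : T × Fin m → S := fun p ↦ ⟨f^[p.2] p.1, hf.iterate _ (hTS p.1.2)⟩
  have hinj : Injective Φ := by
    rintro ⟨⟨t, ht⟩, k⟩ ⟨⟨t', ht'⟩, k'⟩ h
    replace h : f^[k] t = f^[k'] t' := congrArg Subtype.val h
    rcases le_total (k : ℕ) k' with hle | hle
    · obtain ⟨rfl, hk⟩ := hback ht ht' hle k'.2 h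
      rw [Fin.ext hk]
    · obtain ⟨rfl, hk⟩ := hback ht' ht hle k.2 h.symm
      rw [Fin.ext hk]
  have hsurj : Surjective Φ := by
    rintro ⟨x, hx⟩
    obtain ⟨k, ⟨hkm, hkT⟩, -⟩ := huniq x hx
    refine ⟨⟨⟨_, hkT⟩, ⟨(m - k) % m, Nat.mod_lt _ (by omega)⟩⟩, Subtype.ext ?_⟩
    change f^[(m - k) % m] (f^[k] x) = x
    rcases k.eq_zero_or_pos with rfl | hk
    · simp
    · rw [Nat.mod_eq_of_lt (by omega), ← iterate_add_apply, Nat.sub_add_cancel hkm.le, hper x hx]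
  rw [← Nat.card_coe_set_eq, ← Nat.card_coe_set_eq, ← Nat.card_fin m, ← Nat.card_prod]
  exact Nat.card_congr (Equiv.ofBijective Φ ⟨hinj, hsurj⟩)

theorem Real.sin_pos_and_sin_sub_neg_iff {α u : ℝ} (hα : 0 < α) (hαπ : α ≤ π) (hu : sin u ≠ 0) :
    0 < sin u ∧ sin (u - α) < 0 ↔ ∃ n : ℤ, u - n * (2 * π) ∈ Ico 0 α := by
  constructor
  · rintro ⟨hpos, hneg⟩
    -- reduce `u` into `[α - π, α + π)`, where each sign condition excludes one side of `[0, α)`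
    set n := toIcoDiv two_pi_pos (α - π) u
    obtain ⟨hw₁, hw₂⟩ := toIcoMod_mem_Ico two_pi_pos (α - π) u
    rw [← sub_sub_cancel u (toIcoMod _ _ _), self_sub_toIcoMod_eq_mul] at hw₁ hw₂
    have hsub_α : u - α - n * (2 * π) = u - n * (2 * π) - α := by ring
    rw [← sin_sub_int_mul_two_pi u n] at hpos
    rw [← sin_sub_int_mul_two_pi (u - α) n, hsub_α] at hneg
    refine ⟨n, le_of_not_gt fun hw ↦ ?_, lt_of_not_ge fun hw ↦ ?_⟩
    · exact (sin_neg_of_neg_of_neg_pi_lt hw (by linarith)).not_gt hpos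
    · exact (sin_nonneg_of_nonneg_of_le_pi (sub_nonneg.2 hw) (by linarith)).not_gt hneg
  · rintro ⟨n, hw0, hwα⟩
    have hsin_w : sin (u - n * (2 * π)) = sin u := sin_sub_int_mul_two_pi u n
    have hw0' : 0 < u - n * (2 * π) := hw0.lt_of_ne fun h ↦ hu (by rw [← hsin_w, ← h, sin_zero])
    refine ⟨hsin_w ▸ sin_pos_of_pos_of_lt_pi hw0' (by linarith), ?_⟩
    rw [← sin_sub_int_mul_two_pi (u - α) n]
    exact sin_neg_of_neg_of_neg_pi_lt (by linarith) (by linarith)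

theorem existsUnique_lt_sub_mul_sub_mem_Ico {α : ℝ} (hα : 0 < α) {m : ℕ} (hm : 0 < m) (u : ℝ) :
    ∃! k : ℕ, k < m ∧ ∃ n : ℤ, u - k * α - n * (m * α) ∈ Ico 0 α := by
  have hfloor (k : ℕ) (n : ℤ) : u - k * α - n * (m * α) ∈ Ico 0 α ↔ ⌊u / α⌋ = k + n * m := by
    rw [Int.floor_eq_iff, mem_Ico, le_div_iff₀ hα, div_lt_iff₀ hα]
    push_cast
    constructor <;> rintro ⟨h₁, h₂⟩ <;> constructor <;> linarith
  simp only [hfloor]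
  have hm' : (0 : ℤ) < m := by exact_mod_cast hm
  have hlt := Int.emod_lt_of_pos ⌊u / α⌋ hm'
  have hnonneg := Int.emod_nonneg ⌊u / α⌋ hm'.ne'
  have hdiv := Int.emod_add_ediv_mul ⌊u / α⌋ m
  refine ⟨(⌊u / α⌋ % m).toNat,
    ⟨by omega, ⌊u / α⌋ / m, by rw [Int.toNat_of_nonneg hnonneg]; linarith⟩, ?_⟩
  rintro k ⟨hkm, n, hn⟩
  rw [hn, Int.add_mul_emod_self_right, Int.emod_eq_of_lt (by omega) (by omega)]
  simp

namespace Orientation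

open RealInnerProductSpace

variable {V : Type*} [NormedAddCommGroup V] [InnerProductSpace ℝ V]
  [Fact (Module.finrank ℝ V = 2)] (o : Orientation ℝ V (Fin 2))

theorem iterate_rotation (θ : Real.Angle) (k : ℕ) :
    (⇑(o.rotation θ))^[k] = o.rotation (k • θ) := by
  induction k with
  | zero => ext; simp
  | succ k ih => ext x; rw [iterate_succ_apply', ih, rotation_rotation, succ_nsmul']

theorem inner_rotation_left_eq_mul_sin {x v : V} (hx : x ≠ 0) (hv : v ≠ 0) (θ : ℝ) :
    ⟪o.rotation θ x, v⟫ = ‖x‖ * ‖v‖ * sin ((o.oangle x v).toReal + π / 2 - θ) := by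
  rw [o.inner_eq_norm_mul_norm_mul_cos_oangle, o.oangle_rotation_left hx hv,
    LinearIsometryEquiv.norm_map, add_sub_right_comm, sin_add_pi_div_two, ← Real.Angle.cos_coe,
    Real.Angle.coe_sub, Real.Angle.coe_toReal]

end Orientation

open RealInnerProductSpace

theorem stmt11_general {V : Type*} [NormedAddCommGroup V] [InnerProductSpace ℝ V]
    [Fact (Module.finrank ℝ V = 2)] (m : ℕ) (hm : 2 ≤ m)
    (o : Orientation ℝ V (Fin 2)) (s : V ≃ₗᵢ[ℝ] V)
    (hs : s = o.rotation ((2 * Real.pi / m : ℝ) : Real.Angle))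
    (S : Set V) (hinv : ∀ x ∈ S, s x ∈ S)
    (v : V) (hreg : ∀ x ∈ S, ⟪x, v⟫ ≠ 0) :
    {x ∈ S | 0 < ⟪x, v⟫ ∧ ⟪s x, v⟫ < 0}.ncard * m = S.ncard := by
  set α := 2 * π / m
  have hα : 0 < α := by positivity
  have hmα : m * α = 2 * π := mul_div_cancel₀ _ (by positivity)
  have hαπ : α ≤ π := by
    rw [div_le_iff₀ (by positivity)]
    nlinarith [pi_pos, show (2 : ℝ) ≤ m by exact_mod_cast hm]
  have hsk (k : ℕ) : (⇑s)^[k] = o.rotation (k * α : ℝ) := by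
    rw [hs, o.iterate_rotation, ← Real.Angle.coe_nsmul, nsmul_eq_mul]
  refine ncard_mul_eq_ncard_of_existsUnique_iterate_mem (sep_subset _ _) hinv
    (fun x _ ↦ by rw [hsk, hmα, Real.Angle.coe_two_pi, o.rotation_zero]; rfl) fun x hx ↦ ?_
  have hx0 : x ≠ 0 := by rintro rfl; exact hreg 0 hx (inner_zero_left v)
  have hv0 : v ≠ 0 := by rintro rfl; exact hreg x hx (inner_zero_right x)
  have hc : 0 < ‖x‖ * ‖v‖ := by positivity
  set u := (o.oangle x v).toReal + π / 2
  have hinner (k : ℕ) : ⟪(⇑s)^[k] x, v⟫ = ‖x‖ * ‖v‖ * sin (u - k * α) := by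
    rw [hsk]; exact o.inner_rotation_left_eq_mul_sin hx0 hv0 _
  have hexit (k : ℕ) : (⇑s)^[k] x ∈ {x ∈ S | 0 < ⟪x, v⟫ ∧ ⟪s x, v⟫ < 0} ↔
      ∃ n : ℤ, u - k * α - n * (m * α) ∈ Ico 0 α := by
    have hsk_mem := MapsTo.iterate hinv k hx
    have hsin : sin (u - k * α) ≠ 0 := fun h ↦ hreg _ hsk_mem (by rw [hinner, h, mul_zero])
    have hsucc : u - ((k + 1 : ℕ) : ℝ) * α = u - k * α - α := by push_cast; ring
    rw [hmα, ← sin_pos_and_sin_sub_neg_iff hα hαπ hsin, mem_sep_iff, ← iterate_succ_apply' (⇑s),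
      hinner, hinner, hsucc, mul_pos_iff_of_pos_left hc, mul_neg_iff]
    simp only [hsk_mem, hc, hc.not_gt, true_and, false_and, or_false]
  simpa only [hexit] using existsUnique_lt_sub_mul_sub_mem_Ico hα (by omega) u

theorem stmt11 {V : Type*} [NormedAddCommGroup V] [InnerProductSpace ℝ V]
    [Fact (Module.finrank ℝ V = 2)] (m : ℕ) (hm : 2 ≤ m)
    (o : Orientation ℝ V (Fin 2)) (s : V ≃ₗᵢ[ℝ] V)
    (hs : s = o.rotation ((2 * Real.pi / m : ℝ) : Real.Angle))
    (S : Set V) (hfin : S.Finite) (h0 : (0 : V) ∉ S)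
    (hinv : ∀ x ∈ S, s x ∈ S)
    (hfree : ∀ x ∈ S, ∀ j : ℕ, 0 < j → j < m → (⇑s)^[j] x ≠ x)
    (v : V) (hreg : ∀ x ∈ S, ⟪x, v⟫ ≠ 0) :
    {x ∈ S | 0 < ⟪x, v⟫ ∧ ⟪s x, v⟫ < 0}.ncard * m = S.ncard :=
  stmt11_general m hm o s hs S hinv v hreg
end

section
/- Suppose x₁,…,x_{l'} are rational numbers with −1 < x_i < 1 solving a linear system x_i = Σ_j (p_j/d_j) c_j^i where the p_j are integers, each d_j ∈ {1,2}, and all c_j^i are half-integers (elements of (1/2)ℤ). Then each x_i, written in lowest terms, has denominator dividing 4. Consequently, if m is an odd positive integer and each m·x_i is required to be an integer, then x_i = 0 for all i. -/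
theorem stmt19 (l l' : ℕ) (x : Fin l' → ℚ) (p : Fin l → ℤ) (d : Fin l → ℚ)
    (hd : ∀ j, d j = 1 ∨ d j = 2)
    (c : Fin l → Fin l' → ℚ) (hc : ∀ j i, ∃ z : ℤ, c j i = (z : ℚ) / 2)
    (hx : ∀ i, x i = ∑ j, ((p j : ℚ) / d j) * c j i)
    (hb : ∀ i, -1 < x i ∧ x i < 1) :
    (∀ i, (x i).den ∣ 4) ∧
    (∀ m : ℕ, Odd m → 0 < m → (∀ i, ∃ z : ℤ, (m : ℚ) * x i = (z : ℚ)) →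
      ∀ i, x i = 0) := by
  have hden : ∀ i, (x i).den ∣ 4 := by
    intro i
    have h4 : ∃ z : ℤ, (4 : ℚ) * x i = (z : ℚ) := by
      rw [hx i, Finset.mul_sum]
      refine Finset.sum_induction _ (fun q => ∃ z : ℤ, q = (z : ℚ)) ?_ ⟨0, by simp⟩ ?_
      · rintro a b ⟨za, ha⟩ ⟨zb, hb⟩; exact ⟨za + zb, by push_cast [ha, hb]; ring⟩
      · intro j _
        obtain ⟨z, hz⟩ := hc j i
        rcases hd j with h | h
        · exact ⟨p j * z * 2, by rw [hz, h]; push_cast; ring⟩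
        · exact ⟨p j * z, by rw [hz, h]; push_cast; ring⟩
    obtain ⟨z, hz⟩ := h4
    have : x i = (z : ℚ) / 4 := by field_simp at hz ⊢; linarith
    rw [this]
    have h := Rat.den_dvd z 4
    rw [Rat.divInt_eq_div] at h
    exact_mod_cast h
  refine ⟨hden, ?_⟩
  intro m hm hmpos hmx i
  obtain ⟨z, hz⟩ := hmx i
  have hdm : (x i).den ∣ m := by
    have : x i = (z : ℚ) / (m : ℚ) := by
      field_simp at hz ⊢
      linarith
    rw [this]
    have h := Rat.den_dvd z (m : ℤ)
    rw [Rat.divInt_eq_div] at h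
    exact_mod_cast h
  have h1 : (x i).den ∣ Nat.gcd 4 m := Nat.dvd_gcd (hden i) hdm
  have hg : Nat.gcd 4 m = 1 := by
    have h2 : Nat.Coprime 2 m := Nat.coprime_two_left.mpr hm
    have h4 := Nat.Coprime.pow_left 2 h2
    norm_num at h4
    exact h4
  have hden1 : (x i).den = 1 := Nat.dvd_one.mp (hg ▸ h1)
  have hxz : x i = ((x i).num : ℚ) := (Rat.den_eq_one_iff _).mp hden1 |>.symm
  obtain ⟨hl, hr⟩ := hb i
  rw [hxz] at hl hr ⊢
  have hl' : (-1 : ℤ) < (x i).num := by exact_mod_cast hl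
  have hr' : (x i).num < 1 := by exact_mod_cast hr
  have : (x i).num = 0 := by omega
  simp [this]
end
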